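/- arXiv:2505.22819 — 3 statements merged into one kernel-verified Lean document; each statement's English description precedes it below -/
import Mathlib

section
/- For every natural number n, ∑_{k=0}^{n} 2^{n-k} · s(n,k) · B_k = ∑_{k=0}^{n} b(n,k) · (-1)^k · k! / (k+1), where B_k are the Bernoulli numbers, s(n,k) are the signed Stirling numbers of the first kind, and b(n,k) are the Bessel numbers of the first kind. -/
/-- The signed Stirling numbers of the first kind `s(n,k)`, defined as the
coefficients in the falling factorial expansion
`x(x-1)⋯(x-n+1) = ∑_{k=0}^{n} s(n,k) xᵏ`. -/
noncomputable def stirlingFirst (n k : ℕ) : ℤ :=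
  (descPochhammer ℤ n).coeff k

/-- The Bessel numbers of the first kind:
`b(n,k) = (-1)^{n-k} (2n-k-1)! / (2^{n-k} (k-1)! (n-k)!)` for `1 ≤ k ≤ n`,
`b(0,0) = 1`, `b(n,0) = 0` for `n ≥ 1`, and `b(n,k) = 0` for `n < k`. -/
def besselFirst (n k : ℕ) : ℚ :=
  if k = 0 then (if n = 0 then 1 else 0)
  else if k ≤ n then
    (-1) ^ (n - k) * (Nat.factorial (2 * n - k - 1)) /
      (2 ^ (n - k) * (Nat.factorial (k - 1)) * (Nat.factorial (n - k)))
  else 0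

/-!
Let `L : ℚ[X] → ℚ` be the linear functional with `L (X ^ k) = B_k`. The left-hand side is `L`
applied to `x (x - 2) ⋯ (x - 2n + 2) = 2ⁿ (x/2)ₙ`, and the Bessel numbers of the first kind are
the coefficients of this polynomial in the falling-factorial basis (both sides satisfy the same
three-term recurrence). The Bernoulli recurrence `∑_{i<j} C(j,i) B_i = [j = 1]` says
`L (p (x + 1)) = L p + p'(0)`; applied to `(x + 1)_{k+1} = (x)_{k+1} + (k + 1) (x)_k` it gives
`L (x)_k = (-1)^k k! / (k + 1)`.
-/

open Polynomial hiding bernoulli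
open Finset
open scoped Nat

noncomputable def bernoulliUmbra : ℚ[X] →ₗ[ℚ] ℚ :=
  lsum fun j => LinearMap.toSpanSingleton ℚ ℚ (bernoulli j)

theorem bernoulliUmbra_eq_sum {p : ℚ[X]} {n : ℕ} (hp : p.natDegree < n) :
    bernoulliUmbra p = ∑ k ∈ range n, p.coeff k * bernoulli k := by
  rw [bernoulliUmbra, lsum_apply, sum_over_range' p (fun j => by simp) n hp]
  simp [LinearMap.toSpanSingleton_apply]

theorem bernoulliUmbra_monomial (j : ℕ) (a : ℚ) :
    bernoulliUmbra (monomial j a) = a * bernoulli j := by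
  simp [bernoulliUmbra, LinearMap.toSpanSingleton_apply]

theorem bernoulliUmbra_X_add_one_pow (j : ℕ) :
    bernoulliUmbra ((X + 1) ^ j) = bernoulli j + if j = 1 then 1 else 0 := by
  rw [bernoulliUmbra_eq_sum (n := j + 1) (Nat.lt_succ_of_le (by compute_degree!)),
    sum_range_succ, coeff_X_add_one_pow, Nat.choose_self, Nat.cast_one, one_mul]
  simp only [coeff_X_add_one_pow, _root_.sum_bernoulli]
  ring

theorem bernoulliUmbra_comp_X_add_one (p : ℚ[X]) :
    bernoulliUmbra (p.comp (X + 1)) = bernoulliUmbra p + p.coeff 1 := by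
  induction p using Polynomial.induction_on' with
  | add p q hp hq => simp only [add_comp, map_add, hp, hq, coeff_add]; ring
  | monomial j a =>
    rw [← C_mul_X_pow_eq_monomial, mul_comp, C_comp, X_pow_comp, ← smul_eq_C_mul, map_smul,
      bernoulliUmbra_X_add_one_pow, C_mul_X_pow_eq_monomial, bernoulliUmbra_monomial, coeff_monomial]
    split_ifs <;> simp_all [mul_add]

theorem descPochhammer_succ_comp_X_add_one (R : Type*) [CommRing R] (k : ℕ) :
    (descPochhammer R (k + 1)).comp (X + 1) =
      descPochhammer R (k + 1) + (k + 1 : R[X]) * descPochhammer R k := by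
  rw [descPochhammer_succ_left, mul_comp, X_comp, comp_assoc, sub_comp, X_comp, one_comp,
    add_sub_cancel_right, comp_X, ← descPochhammer_succ_left, descPochhammer_succ_right]
  ring

theorem coeff_one_descPochhammer_succ (R : Type*) [CommRing R] (n : ℕ) :
    (descPochhammer R (n + 1)).coeff 1 = (-1) ^ n * n ! := by
  induction n with
  | zero => simp
  | succ n ih =>
    have h0 : (descPochhammer R (n + 1)).coeff 0 = 0 := by
      rw [coeff_zero_eq_eval_zero, descPochhammer_ne_zero_eval_zero R n.succ_ne_zero]
    rw [descPochhammer_succ_right, ← C_eq_natCast, mul_sub, coeff_sub, coeff_mul_X, coeff_mul_C,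
      h0, ih, Nat.factorial_succ]
    push_cast
    ring

theorem bernoulliUmbra_descPochhammer (k : ℕ) :
    bernoulliUmbra (descPochhammer ℚ k) = (-1) ^ k * k ! / (k + 1) := by
  have h := bernoulliUmbra_comp_X_add_one (descPochhammer ℚ (k + 1))
  rw [descPochhammer_succ_comp_X_add_one, map_add, ← Nat.cast_add_one, ← C_eq_natCast,
    ← smul_eq_C_mul, map_smul, coeff_one_descPochhammer_succ, smul_eq_mul] at h
  rw [eq_div_iff (by positivity)]
  push_cast at h
  linarith

theorem besselFirst_of_lt {n k : ℕ} (h : n < k) : besselFirst n k = 0 := by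
  simp [besselFirst, Nat.ne_zero_of_lt h, Nat.not_le.mpr h]

theorem besselFirst_succ_zero (n : ℕ) : besselFirst (n + 1) 0 = 0 := by
  simp [besselFirst]

theorem besselFirst_succ_eq_of_add_eq {n j m : ℕ} (h : j + 1 + m = n) :
    besselFirst n (j + 1) = (-1) ^ m * (j + 2 * m)! / (2 ^ m * j ! * m !) := by
  subst h
  simp only [besselFirst, Nat.add_one_ne_zero, if_false, Nat.le_add_right, if_true]
  rw [show 2 * (j + 1 + m) - (j + 1) - 1 = j + 2 * m by omega, Nat.add_sub_cancel_left,
    Nat.add_sub_cancel]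

theorem besselFirst_self (n : ℕ) : besselFirst n n = 1 := by
  cases n with
  | zero => simp [besselFirst]
  | succ n => simp [besselFirst_succ_eq_of_add_eq (m := 0) rfl, Nat.factorial_ne_zero]

theorem besselFirst_succ_succ (n k : ℕ) :
    besselFirst (n + 1) (k + 1) = besselFirst n k + (k + 1 - 2 * n) * besselFirst n (k + 1) := by
  obtain h | rfl | h := lt_trichotomy n k
  · rw [besselFirst_of_lt (by omega), besselFirst_of_lt h, besselFirst_of_lt (by omega)]
    ring
  · simp [besselFirst_self, besselFirst_of_lt]
  cases k with
  | zero =>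
    obtain ⟨m, rfl⟩ : ∃ m, n = m + 1 := ⟨n - 1, by omega⟩
    rw [besselFirst_succ_zero, besselFirst_succ_eq_of_add_eq (j := 0) (m := m + 1) (by omega),
      besselFirst_succ_eq_of_add_eq (j := 0) (m := m) (by omega),
      show 0 + 2 * (m + 1) = 2 * m + 1 + 1 by ring]
    simp only [Nat.factorial_succ, Nat.factorial_zero, zero_add, pow_succ]
    push_cast
    field_simp
    ring
  | succ j =>
    obtain ⟨m, rfl⟩ : ∃ m, n = j + 1 + 1 + m := ⟨n - j - 2, by omega⟩
    rw [besselFirst_succ_eq_of_add_eq (j := j + 1) (m := m + 1) (by omega),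
      besselFirst_succ_eq_of_add_eq (j := j) (m := m + 1) (by omega),
      besselFirst_succ_eq_of_add_eq (j := j + 1) (m := m) (by omega),
      show j + 1 + 2 * (m + 1) = j + 2 * m + 1 + 1 + 1 by ring,
      show j + 2 * (m + 1) = j + 2 * m + 1 + 1 by ring, show j + 1 + 2 * m = j + 2 * m + 1 by ring]
    simp only [Nat.factorial_succ, pow_succ]
    push_cast
    field_simp
    ring

noncomputable def descPochhammerStepTwo (n : ℕ) : ℚ[X] :=
  ∏ j ∈ range n, (X - C (2 * j : ℚ))

theorem natDegree_descPochhammerStepTwo (n : ℕ) : (descPochhammerStepTwo n).natDegree = n := by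
  rw [descPochhammerStepTwo, natDegree_finsetProd_X_sub_C_eq_card, card_range]

theorem descPochhammerStepTwo_eq_sum_besselFirst (n : ℕ) :
    descPochhammerStepTwo n = ∑ k ∈ range (n + 1), C (besselFirst n k) * descPochhammer ℚ k := by
  induction n with
  | zero => simp [descPochhammerStepTwo, besselFirst]
  | succ n ih =>
    set g : ℕ → ℚ[X] := fun k => C ((k - 2 * n) * besselFirst n k) * descPochhammer ℚ k
    have hg : ∑ k ∈ range (n + 1), g (k + 1) = ∑ k ∈ range (n + 1), g k := by
      have g0 : g 0 = 0 := by rcases n with _ | n <;> simp [g, besselFirst_succ_zero]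
      have gn : g (n + 1) = 0 := by simp [g, besselFirst_of_lt]
      rw [sum_range_succ, gn, sum_range_succ' g, g0]
    calc descPochhammerStepTwo (n + 1)
        = ∑ k ∈ range (n + 1), (C (besselFirst n k) * descPochhammer ℚ (k + 1) + g k) := by
          rw [descPochhammerStepTwo, prod_range_succ, ← descPochhammerStepTwo, ih, sum_mul]
          refine sum_congr rfl fun k _ => ?_
          simp only [g, descPochhammer_succ_right, ← C_eq_natCast, C_mul, C_sub]
          ring
      _ = ∑ k ∈ range (n + 1), (C (besselFirst n k) * descPochhammer ℚ (k + 1) + g (k + 1)) := by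
          rw [sum_add_distrib, sum_add_distrib, hg]
      _ = ∑ k ∈ range (n + 2), C (besselFirst (n + 1) k) * descPochhammer ℚ k := by
          rw [sum_range_succ' _ (n + 1), besselFirst_succ_zero, C_0, zero_mul, add_zero]
          refine sum_congr rfl fun k _ => ?_
          simp only [g, besselFirst_succ_succ, Nat.cast_add, Nat.cast_one, C_mul, C_add, C_sub, C_1]
          ring

theorem descPochhammerStepTwo_eq_comp (n : ℕ) :
    descPochhammerStepTwo n = C (2 ^ n) * (descPochhammer ℚ n).comp (C 2⁻¹ * X) := by
  induction n with
  | zero => simp [descPochhammerStepTwo]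
  | succ n ih =>
    rw [descPochhammerStepTwo, prod_range_succ, ← descPochhammerStepTwo, ih,
      descPochhammer_succ_right, mul_comp, sub_comp, X_comp, natCast_comp, pow_succ, C_mul,
      ← C_eq_natCast, C_mul]
    have h2 : C (2 : ℚ) * C 2⁻¹ = 1 := by rw [← C_mul, mul_inv_cancel₀ two_ne_zero, C_1]
    linear_combination (-(C (2 ^ n) * (descPochhammer ℚ n).comp (C 2⁻¹ * X) * X)) * h2

theorem coeff_descPochhammerStepTwo {n k : ℕ} (hk : k ≤ n) :
    (descPochhammerStepTwo n).coeff k = 2 ^ (n - k) * stirlingFirst n k := by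
  obtain ⟨m, rfl⟩ := Nat.exists_eq_add_of_le hk
  rw [descPochhammerStepTwo_eq_comp, coeff_C_mul, comp_C_mul_X_coeff, stirlingFirst,
    ← descPochhammer_map (Int.castRingHom ℚ), coeff_map, eq_intCast, Nat.add_sub_cancel_left,
    pow_add, inv_pow]
  field_simp

theorem stmt1 (n : ℕ) :
    ∑ k ∈ Finset.range (n + 1), 2 ^ (n - k) * (stirlingFirst n k : ℚ) * bernoulli k =
      ∑ k ∈ Finset.range (n + 1),
        besselFirst n k * ((-1) ^ k * (Nat.factorial k) / (k + 1)) := by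
  calc ∑ k ∈ range (n + 1), 2 ^ (n - k) * (stirlingFirst n k : ℚ) * bernoulli k
      = bernoulliUmbra (descPochhammerStepTwo n) := by
        rw [bernoulliUmbra_eq_sum (n := n + 1) (by rw [natDegree_descPochhammerStepTwo]; omega)]
        refine sum_congr rfl fun k hk => ?_
        rw [coeff_descPochhammerStepTwo (Nat.lt_succ_iff.mp (mem_range.mp hk))]
    _ = ∑ k ∈ range (n + 1), besselFirst n k * ((-1) ^ k * k ! / (k + 1)) := by
        simp only [descPochhammerStepTwo_eq_sum_besselFirst, map_sum, ← smul_eq_C_mul, map_smul,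
          bernoulliUmbra_descPochhammer, smul_eq_mul]
end

section
/- For every natural number n and every real (or rational) t, the product t(t-2)(t-4)···(t-2(n-1)) = ∏_{j=0}^{n-1}(t-2j) equals ∑_{k=0}^{n} b(n,k) · (t)_k, where (t)_k = t(t-1)···(t-k+1) is the falling factorial and b(n,k) are the Bessel numbers of the first kind. -/
/-- The falling factorial `(t)_k = t(t-1)⋯(t-k+1)`, with `(t)_0 = 1`. -/
def fallingFactorial (t : ℚ) (k : ℕ) : ℚ :=
  ∏ j ∈ Finset.range k, (t - j)

open Finset Nat

lemma fallingFactorial_succ (t : ℚ) (k : ℕ) :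
    fallingFactorial t (k + 1) = fallingFactorial t k * (t - k) :=
  prod_range_succ _ k

lemma fallingFactorial_mul_sub (t c : ℚ) (k : ℕ) :
    fallingFactorial t k * (t - c) = fallingFactorial t (k + 1) + (k - c) * fallingFactorial t k := by
  rw [fallingFactorial_succ]
  ring

namespace besselFirst

@[simp]
lemma succ_zero (n : ℕ) : besselFirst (n + 1) 0 = 0 := by
  simp [besselFirst]

lemma of_lt {n k : ℕ} (h : n < k) : besselFirst n k = 0 := by
  simp [besselFirst, show k ≠ 0 by omega, show ¬k ≤ n by omega]

lemma succ_add_succ (j m : ℕ) :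
    besselFirst (j + 1 + m) (j + 1) = (-1) ^ m * (j + 2 * m)! / (2 ^ m * j ! * m !) := by
  simp [besselFirst, show j + 1 + m - (j + 1) = m by omega,
    show 2 * (j + 1 + m) - (j + 1) - 1 = j + 2 * m by omega]

@[simp]
lemma self (n : ℕ) : besselFirst n n = 1 := by
  cases n with
  | zero => simp [besselFirst]
  | succ j => simpa [factorial_ne_zero] using succ_add_succ j 0

lemma succ_succ (n k : ℕ) :
    besselFirst (n + 1) (k + 1) = besselFirst n k + ((k + 1 : ℚ) - 2 * n) * besselFirst n (k + 1) := by
  rcases lt_trichotomy k n with hlt | rfl | hgt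
  · obtain ⟨m, rfl⟩ : ∃ m, n = k + 1 + m := ⟨n - k - 1, by omega⟩
    cases k with
    | zero =>
      rw [show 0 + 1 + m + 1 = 0 + 1 + (m + 1) by ring, succ_add_succ, succ_add_succ,
        show 0 + 1 + m = m + 1 by ring, succ_zero, show 0 + 2 * (m + 1) = 0 + 2 * m + 1 + 1 by ring]
      simp only [factorial_succ, cast_mul, cast_add, cast_ofNat, cast_one, cast_zero]
      field_simp
      ring
    | succ j =>
      rw [show j + 1 + 1 + m + 1 = j + 1 + 1 + (m + 1) by ring, succ_add_succ,
        show j + 1 + 1 + m = j + 1 + (m + 1) by ring, succ_add_succ,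
        show j + 1 + (m + 1) = j + 1 + 1 + m by ring, succ_add_succ,
        show j + 1 + 2 * (m + 1) = j + 2 * m + 1 + 1 + 1 by ring,
        show j + 2 * (m + 1) = j + 2 * m + 1 + 1 by ring,
        show j + 1 + 2 * m = j + 2 * m + 1 by ring]
      simp only [factorial_succ, cast_mul, cast_add, cast_ofNat, cast_one]
      field_simp
      ring
  · rw [self, self, of_lt (lt_add_one k)]
    ring
  · rw [of_lt hgt, of_lt (by omega), of_lt (by omega)]
    ring

end besselFirst

lemma sum_besselFirst_succ_mul_fallingFactorial (n : ℕ) (t : ℚ) :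
    ∑ k ∈ range (n + 2), besselFirst (n + 1) k * fallingFactorial t k =
      (∑ k ∈ range (n + 1), besselFirst n k * fallingFactorial t k) * (t - 2 * n) := by
  set G : ℕ → ℚ := fun k => (k - 2 * n) * besselFirst n k * fallingFactorial t k
  have telescope : ∑ k ∈ range (n + 1), (G (k + 1) - G k) = 0 := by
    rw [sum_range_sub, sub_eq_zero]
    simp only [G, besselFirst.of_lt (lt_add_one n)]
    cases n <;> simp
  calc ∑ k ∈ range (n + 2), besselFirst (n + 1) k * fallingFactorial t k
      = ∑ k ∈ range (n + 1), (besselFirst n k * fallingFactorial t (k + 1) + G (k + 1)) := by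
        rw [sum_range_succ', besselFirst.succ_zero, zero_mul, add_zero]
        refine sum_congr rfl fun k _ => ?_
        simp only [besselFirst.succ_succ, G]
        push_cast
        ring
    _ = ∑ k ∈ range (n + 1), (besselFirst n k * fallingFactorial t (k + 1) + G k) := by
        rw [← sub_eq_zero, ← sum_sub_distrib, ← telescope]
        exact sum_congr rfl fun k _ => by ring
    _ = _ := by
        rw [sum_mul]
        refine sum_congr rfl fun k _ => ?_
        rw [mul_assoc, fallingFactorial_mul_sub]
        ring

theorem stmt4 (n : ℕ) (t : ℚ) :
    ∏ j ∈ Finset.range n, (t - 2 * j) =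
      ∑ k ∈ Finset.range (n + 1), besselFirst n k * fallingFactorial t k := by
  induction n with
  | zero => simp [fallingFactorial]
  | succ n ih => rw [prod_range_succ, ih, sum_besselFirst_succ_mul_fallingFactorial]
end

section
/- For every natural number n, the Bernoulli number B_n satisfies B_n = ∑_{k=0}^{n} S(n,k) · (-1)^k · k! / (k+1), where S(n,k) are the Stirling numbers of the second kind. -/
/-!
The Stirling-side sequence `T n = ∑ₖ S(n,k) (-1)ᵏ k! / (k+1)` satisfies the recursion
`∑_{i<n} C(n,i) T i = [n = 1]` that determines the Bernoulli numbers. Summing over `i` first,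
`∑ᵢ C(n,i) S(i,k) = S(n+1,k+1)` (choose the other elements of the block of a new element), and
the recurrence for `S(n+1,k+1)` splits the result into `T n` plus the sum
`∑ₖ (-1)ᵏ k! S(n,k+1)`, which telescopes to `[n = 1]`.
-/

/-- The Stirling numbers of the second kind `S(n,k)`, counting the partitions of an
`n`-element set into `k` nonempty blocks, defined via the standard recurrence
`S(n+1,k+1) = (k+1)·S(n,k+1) + S(n,k)` with `S(0,0) = 1`. -/
def stirlingSecond : ℕ → ℕ → ℕ
  | 0, 0 => 1
  | 0, _ + 1 => 0
  | _ + 1, 0 => 0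
  | n + 1, k + 1 => (k + 1) * stirlingSecond n (k + 1) + stirlingSecond n k

open Finset

theorem stirlingSecond_eq_nat_stirlingSecond : stirlingSecond = Nat.stirlingSecond := by
  funext n k
  induction n generalizing k with
  | zero => cases k <;> rfl
  | succ n ih =>
    cases k with
    | zero => rfl
    | succ k => rw [stirlingSecond, Nat.stirlingSecond_succ_succ, ih, ih]

theorem sum_range_choose_mul_stirlingSecond (n k : ℕ) :
    ∑ i ∈ range (n + 1), n.choose i * Nat.stirlingSecond i k =
      Nat.stirlingSecond (n + 1) (k + 1) := by
  induction n generalizing k with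
  | zero => cases k <;> rfl
  | succ n ih =>
    have pascal := sum_choose_succ_mul (R := ℕ) (fun i _ => Nat.stirlingSecond i k) n
    simp only [Nat.cast_id] at pascal
    rw [pascal, ih]
    cases k with
    | zero => simp [Nat.stirlingSecond_one_right]
    | succ k =>
      simp only [Nat.stirlingSecond_succ_succ, mul_add, sum_add_distrib, mul_left_comm _ (k + 1),
        ← mul_sum, ih]
      ring

theorem sum_range_stirlingSecond_mul_of_lt {R : Type*} [NonAssocSemiring R] (f : ℕ → R)
    {n N : ℕ} (h : n < N) :
    ∑ k ∈ range N, (Nat.stirlingSecond n k : R) * f k =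
      ∑ k ∈ range (n + 1), (Nat.stirlingSecond n k : R) * f k := by
  refine (sum_subset (range_subset_range.2 h) fun k _ hk => ?_).symm
  rw [Nat.stirlingSecond_eq_zero_of_lt (by simpa using hk), Nat.cast_zero, zero_mul]

theorem sum_range_neg_one_pow_mul_factorial_mul_stirlingSecond_succ {R : Type*} [CommRing R]
    (n : ℕ) :
    ∑ k ∈ range (n + 1), (-1 : R) ^ k * k.factorial * Nat.stirlingSecond n (k + 1) =
      if n = 1 then 1 else 0 := by
  cases n with
  | zero => simp
  | succ m =>
    let f : ℕ → R := fun k => (-1) ^ k * k.factorial * Nat.stirlingSecond m k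
    have step : ∀ k,
        (-1 : R) ^ k * k.factorial * Nat.stirlingSecond (m + 1) (k + 1) = f k - f (k + 1) := by
      intro k
      simp only [f, Nat.stirlingSecond_succ_succ, Nat.factorial_succ]
      push_cast
      ring
    simp only [step, sum_range_sub', f, Nat.stirlingSecond_eq_zero_of_lt (by omega : m < m + 2)]
    cases m <;> simp

theorem eq_bernoulli_of_sum_range_choose_mul (a : ℕ → ℚ)
    (h : ∀ n, ∑ k ∈ range n, (n.choose k : ℚ) * a k = if n = 1 then 1 else 0) (n : ℕ) :
    a n = bernoulli n := by
  induction n using Nat.strong_induction_on with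
  | _ n ih =>
    have hsum := (h (n + 1)).trans (sum_bernoulli (n + 1)).symm
    rw [sum_range_succ, sum_range_succ, sum_congr rfl fun k hk => by rw [ih k (mem_range.1 hk)],
      add_right_inj, Nat.choose_succ_self_right] at hsum
    exact mul_left_cancel₀ (by positivity) hsum

noncomputable def bernoulliStirling (n : ℕ) : ℚ :=
  ∑ k ∈ range (n + 1), (Nat.stirlingSecond n k : ℚ) * ((-1) ^ k * k.factorial / (k + 1))

theorem sum_range_succ_choose_mul_bernoulliStirling (n : ℕ) :
    ∑ i ∈ range (n + 1), (n.choose i : ℚ) * bernoulliStirling i =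
      (if n = 1 then 1 else 0) + bernoulliStirling n := by
  set c : ℕ → ℚ := fun k => (-1) ^ k * k.factorial / (k + 1)
  calc ∑ i ∈ range (n + 1), (n.choose i : ℚ) * bernoulliStirling i
      = ∑ k ∈ range (n + 1), ∑ i ∈ range (n + 1),
          (n.choose i : ℚ) * (Nat.stirlingSecond i k * c k) := by
        rw [sum_comm]
        refine sum_congr rfl fun i hi => ?_
        rw [bernoulliStirling, ← sum_range_stirlingSecond_mul_of_lt _ (mem_range.1 hi), mul_sum]
    _ = ∑ k ∈ range (n + 1), (Nat.stirlingSecond (n + 1) (k + 1) : ℚ) * c k := by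
        refine sum_congr rfl fun k _ => ?_
        rw [← sum_range_choose_mul_stirlingSecond, Nat.cast_sum, sum_mul]
        push_cast
        simp only [mul_assoc]
    _ = ∑ k ∈ range (n + 1), ((-1 : ℚ) ^ k * k.factorial * Nat.stirlingSecond n (k + 1) +
          Nat.stirlingSecond n k * c k) := by
        refine sum_congr rfl fun k _ => ?_
        rw [Nat.stirlingSecond_succ_succ]
        push_cast
        simp only [c]
        field_simp
    _ = (if n = 1 then 1 else 0) + bernoulliStirling n := by
        rw [sum_add_distrib, sum_range_neg_one_pow_mul_factorial_mul_stirlingSecond_succ]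
        rfl

theorem sum_range_choose_mul_bernoulliStirling (n : ℕ) :
    ∑ i ∈ range n, (n.choose i : ℚ) * bernoulliStirling i = if n = 1 then 1 else 0 := by
  simpa [sum_range_succ] using sum_range_succ_choose_mul_bernoulliStirling n

theorem stmt5 (n : ℕ) :
    bernoulli n =
      ∑ k ∈ Finset.range (n + 1),
        (stirlingSecond n k : ℚ) * (-1) ^ k * (Nat.factorial k) / (k + 1) := by
  rw [← eq_bernoulli_of_sum_range_choose_mul _ sum_range_choose_mul_bernoulliStirling,
    bernoulliStirling, stirlingSecond_eq_nat_stirlingSecond]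
  simp only [mul_assoc, mul_div_assoc]
end
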